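/- arXiv:1106.4229 — 2 statements merged into one kernel-verified Lean document; each statement's English description precedes it below -/
import Mathlib

section
/- Let $1 < p < \infty$ and let $h(x) = e^{\rho \cdot x}$ where $\rho = \alpha + i\beta$ with $\alpha, \beta \in \mathbb{R}^n$ not both zero. Then $h$ satisfies the complex $p$-Laplace equation $\mathrm{div}(|\nabla h|^{p-2} \nabla h) = 0$ on $\mathbb{R}^n$ if and only if $(p-1)|\alpha|^2 = |\beta|^2$ and $\alpha \cdot \beta = 0$. -/
open Complex

/-!
Write `ρ = α + iβ`. Then `∇h = h • ρ` and `|∇h| = |ρ| e^{α·x}`, so each component of the flux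
`|∇h|^{p-2} ∇h` is `|ρ|^{p-2} ρ_i e^{σ·x}` with `σ = ρ + (p-2) Re ρ = (p-1)α + iβ`. Its divergence
is therefore `|ρ|^{p-2} e^{σ·x} ∑ ρ_i σ_i`, and `∑ ρ_i σ_i = (p-1)|α|² - |β|² + i p α·β`.
-/

lemma norm_cexp_rpow_mul_cexp (w : ℂ) (s : ℝ) :
    ((‖exp w‖ ^ s : ℝ) : ℂ) * exp w = exp (s * w.re + w) := by
  rw [norm_exp, ← Real.exp_mul, ofReal_exp, ← exp_add]
  push_cast
  ring_nf

noncomputable section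

namespace ComplexExponential

variable {ι : Type*}

def complexify (α β : EuclideanSpace ℝ ι) : ι → ℂ := fun i => α i + β i * I

def fluxExponent (p : ℝ) (ρ : ι → ℂ) : ι → ℂ := fun j => ρ j + ((p - 2 : ℝ) : ℂ) * (ρ j).re

lemma complexify_mul_fluxExponent (p : ℝ) (α β : EuclideanSpace ℝ ι) (i : ι) :
    complexify α β i * fluxExponent p (complexify α β) i
      = ⟨(p - 1) * α i ^ 2 - β i ^ 2, p * (α i * β i)⟩ := by
  apply Complex.ext <;>
    simp only [complexify, fluxExponent, ofReal_sub, ofReal_ofNat, add_re, ofReal_re, mul_re, I_re,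
      mul_zero, ofReal_im, I_im, mul_one, sub_self, add_zero, sub_re, re_ofNat, sub_im, im_ofNat,
      sub_zero, add_im, mul_im, zero_add, zero_mul] <;>
    ring

variable [Fintype ι]

def complexPairing (z : ι → ℂ) : EuclideanSpace ℝ ι →L[ℝ] ℂ :=
  ∑ j, z j • (ofRealCLM.comp (EuclideanSpace.proj j))

@[simp]
lemma complexPairing_apply (z : ι → ℂ) (y : EuclideanSpace ℝ ι) :
    complexPairing z y = ∑ j, z j * y j := by
  simp [complexPairing, smul_eq_mul]

lemma complexPairing_single [DecidableEq ι] (z : ι → ℂ) (i : ι) :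
    complexPairing z (EuclideanSpace.single i 1) = z i := by
  simp [apply_ite]

lemma complexPairing_fluxExponent (p : ℝ) (ρ : ι → ℂ) (y : EuclideanSpace ℝ ι) :
    complexPairing (fluxExponent p ρ) y
      = ((p - 2 : ℝ) : ℂ) * (complexPairing ρ y).re + complexPairing ρ y := by
  simp only [complexPairing_apply, fluxExponent, re_sum, mul_re, ofReal_re, ofReal_im, mul_zero,
    sub_zero, ofReal_sum, ofReal_mul, Finset.mul_sum, ← Finset.sum_add_distrib]
  refine Finset.sum_congr rfl fun j _ => ?_
  ring

lemma pLaplaceFlux_cexp_apply (p : ℝ) (ρ : ι → ℂ) (y : EuclideanSpace ℝ ι) (i : ι) :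
    (‖(exp (complexPairing ρ y) • WithLp.toLp 2 ρ : EuclideanSpace ℂ ι)‖ ^ (p - 2) : ℝ) •
        (exp (complexPairing ρ y) • WithLp.toLp 2 ρ : EuclideanSpace ℂ ι) i
      = ((‖(WithLp.toLp 2 ρ : EuclideanSpace ℂ ι)‖ ^ (p - 2) : ℝ) : ℂ) * ρ i *
          exp (complexPairing (fluxExponent p ρ) y) := by
  rw [norm_smul, Real.mul_rpow (norm_nonneg _) (norm_nonneg _), complexPairing_fluxExponent,
    ← norm_cexp_rpow_mul_cexp, real_smul]
  simp only [PiLp.smul_apply, smul_eq_mul, ofReal_mul]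
  ring

lemma sum_fderiv_const_mul_cexp [DecidableEq ι] (c : ℂ) (ρ σ : ι → ℂ) (x : EuclideanSpace ℝ ι) :
    ∑ i, fderiv ℝ (fun y => c * ρ i * exp (complexPairing σ y)) x (EuclideanSpace.single i 1)
      = c * exp (complexPairing σ x) * ∑ i, ρ i * σ i := by
  rw [Finset.mul_sum]
  refine Finset.sum_congr rfl fun i _ => ?_
  rw [((complexPairing σ).hasFDerivAt.cexp.const_mul (c * ρ i)).fderiv]
  simp only [smul_apply, complexPairing_single, smul_eq_mul]
  ring

lemma sum_complexify_mul_fluxExponent (p : ℝ) (α β : EuclideanSpace ℝ ι) :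
    ∑ i, complexify α β i * fluxExponent p (complexify α β) i
      = ⟨(p - 1) * ‖α‖ ^ 2 - ‖β‖ ^ 2, p * inner ℝ α β⟩ := by
  apply Complex.ext <;>
    simp [complexify_mul_fluxExponent, re_sum, im_sum, EuclideanSpace.norm_sq_eq, PiLp.inner_apply,
      Finset.mul_sum, mul_comm]

lemma rpow_norm_mul_sum_mul_eq_zero_iff (ρ σ : ι → ℂ) (s : ℝ) :
    ((‖(WithLp.toLp 2 ρ : EuclideanSpace ℂ ι)‖ ^ s : ℝ) : ℂ) * ∑ i, ρ i * σ i = 0 ↔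
      ∑ i, ρ i * σ i = 0 := by
  refine ⟨fun h => ?_, fun h => by rw [h, mul_zero]⟩
  rcases mul_eq_zero.1 h with hc | hS
  · have hρ : ρ = 0 := (WithLp.toLp_eq_zero 2).1 <| norm_eq_zero.1
      ((Real.rpow_eq_zero_iff_of_nonneg (norm_nonneg _)).1 (ofReal_eq_zero.1 hc)).1
    simp [hρ]
  · exact hS

end ComplexExponential

end

open ComplexExponential in
theorem pHarmonic_complex_exponential_general (n : ℕ) (p : ℝ) (hp : 1 < p)
    (α β : EuclideanSpace ℝ (Fin n))
    (h : EuclideanSpace ℝ (Fin n) → ℂ)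
    (hh : ∀ x, h x = Complex.exp (∑ i, (α i + β i * I) * x i))
    (gradh : EuclideanSpace ℝ (Fin n) → EuclideanSpace ℂ (Fin n))
    (hgrad : ∀ x i, gradh x i = (α i + β i * I) * h x) :
    (∀ x : EuclideanSpace ℝ (Fin n), ∑ i,
        fderiv ℝ (fun y => (‖gradh y‖ ^ (p - 2) : ℝ) • gradh y i) x
          (EuclideanSpace.single i 1) = 0)
      ↔ ((p - 1) * ‖α‖ ^ 2 = ‖β‖ ^ 2 ∧ inner ℝ α β = (0 : ℝ)) := by
  set ρ := complexify α β
  have hgradh : gradh = fun y => exp (complexPairing ρ y) • WithLp.toLp 2 ρ := by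
    funext y
    ext i
    simp [ρ, complexify, hgrad, hh, mul_comm]
  have hdiv : ∀ x, ∑ i, fderiv ℝ (fun y => (‖gradh y‖ ^ (p - 2) : ℝ) • gradh y i) x
      (EuclideanSpace.single i 1) = exp (complexPairing (fluxExponent p ρ) x) *
        (((‖(WithLp.toLp 2 ρ : EuclideanSpace ℂ (Fin n))‖ ^ (p - 2) : ℝ) : ℂ) *
          ∑ i, ρ i * fluxExponent p ρ i) := by
    intro x
    simp only [hgradh, pLaplaceFlux_cexp_apply]
    rw [sum_fderiv_const_mul_cexp]
    ring
  have hp0 : p ≠ 0 := by positivity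
  simp_rw [hdiv, mul_eq_zero (a := exp _), exp_ne_zero, false_or, forall_const,
    rpow_norm_mul_sum_mul_eq_zero_iff, ρ, sum_complexify_mul_fluxExponent, Complex.ext_iff,
    zero_re, zero_im, sub_eq_zero, mul_eq_zero, hp0, false_or]

/-- The complex exponential `h(x) = e^{ρ·x}`, `ρ = α + iβ` (with `α, β` not both zero),
is `p`-harmonic, i.e. `div(|∇h|^{p-2}∇h) = 0` on `ℝⁿ` (divergence computed
componentwise for the `ℂⁿ`-valued field `|∇h|^{p-2}∇h`, where `∇h(x) = ρ e^{ρ·x}` and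
`|z| = (|Re z|² + |Im z|²)^{1/2}`), if and only if `(p-1)|α|² = |β|²` and `α·β = 0`. -/
theorem pHarmonic_complex_exponential (n : ℕ) (p : ℝ) (hp : 1 < p)
    (α β : EuclideanSpace ℝ (Fin n)) (hαβ : (α, β) ≠ 0)
    (h : EuclideanSpace ℝ (Fin n) → ℂ)
    (hh : ∀ x, h x = Complex.exp (∑ i, (α i + β i * I) * x i))
    (gradh : EuclideanSpace ℝ (Fin n) → EuclideanSpace ℂ (Fin n))
    (hgrad : ∀ x i, gradh x i = (α i + β i * I) * h x) :
    (∀ x : EuclideanSpace ℝ (Fin n), ∑ i,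
        fderiv ℝ (fun y => (‖gradh y‖ ^ (p - 2) : ℝ) • gradh y i) x
          (EuclideanSpace.single i 1) = 0)
      ↔ ((p - 1) * ‖α‖ ^ 2 = ‖β‖ ^ 2 ∧ inner ℝ α β = (0 : ℝ)) :=
  pHarmonic_complex_exponential_general n p hp α β h hh gradh hgrad
end

section
/- Let $1 < p < \infty$, let $n \geq 2$, and define for $x = (x_1, \dots, x_n)$ in the upper half space the function $h(x) = e^{-x_n} a(x_1)$, where $a : \mathbb{R} \to \mathbb{R}$ is a $C^2$ function satisfying the ODE $a''(x_1) + V(a(x_1), a'(x_1))\, a(x_1) = 0$ with $V(a, a') = \frac{(2p-3)(a')^2 + (p-1)a^2}{(p-1)(a')^2 + a^2}$ wherever $(a(x_1), a'(x_1)) \neq (0,0)$. Then $h$ satisfies $\mathrm{div}(|\nabla h|^{p-2}\nabla h) = 0$ at every point of $\{x_n > 0\}$ where $\nabla h \neq 0$. -/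
/-!
The gradient of `h = e^{-x_n} a(x_1)` is `e^{-x_n} (a' e₁ - a eₙ)`, so the flux `|∇h|^{p-2} ∇h`
equals `e^{(1-p) x_n} W(x_1)` with `W = |(a, a')|^{p-2} (a' e₁ - a eₙ)`. Its divergence is
`e^{(1-p) x_n} (Φ' + (p-1) |(a, a')|^{p-2} a)` with `Φ = |(a, a')|^{p-2} a'`, and after expanding
`Φ'` this is `e^{(1-p) x_n} |(a, a')|^{p-4}` times `((p-1) a'² + a²) a'' + ((2p-3) a'² + (p-1) a²) a`,
which vanishes by Wolff's ODE with its denominator cleared.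
-/

open Real

theorem sq_add_sq_pos_of_pair_ne_zero {a b : ℝ} (hab : (a, b) ≠ (0, 0)) : 0 < b ^ 2 + a ^ 2 := by
  have hne : a ≠ 0 ∨ b ≠ 0 := by
    contrapose! hab
    rw [hab.1, hab.2]
  rcases hne with h | h <;> positivity

theorem norm_exp_smul_rpow_smul {E : Type*} [NormedAddCommGroup E] [NormedSpace ℝ E]
    (s q : ℝ) (w : E) :
    ‖exp s • w‖ ^ q • (exp s • w) = exp ((q + 1) * s) • (‖w‖ ^ q • w) := by
  rw [norm_smul, norm_of_nonneg (exp_nonneg s), mul_rpow (exp_nonneg s) (norm_nonneg w),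
    smul_smul, smul_smul, ← exp_mul, mul_right_comm, ← exp_add]
  congr 3
  ring

theorem hasDerivAt_sqrt_rpow_mul_of_wolff_ode {p : ℝ} (hp : 1 < p) {a b : ℝ → ℝ} {t b₂ : ℝ}
    (ha : HasDerivAt a (b t) t) (hb : HasDerivAt b b₂ t) (hab : (a t, b t) ≠ (0, 0))
    (hode : b₂ + ((2 * p - 3) * b t ^ 2 + (p - 1) * a t ^ 2) / ((p - 1) * b t ^ 2 + a t ^ 2) * a t
      = 0) :
    HasDerivAt (fun s => √(b s ^ 2 + a s ^ 2) ^ (p - 2) * b s)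
      (-(p - 1) * (√(b t ^ 2 + a t ^ 2) ^ (p - 2) * a t)) t := by
  have hq : 0 < b t ^ 2 + a t ^ 2 := sq_add_sq_pos_of_pair_ne_zero hab
  have hD : 0 < (p - 1) * b t ^ 2 + a t ^ 2 := by
    nlinarith [sq_nonneg (a t), sq_nonneg (b t), mul_nonneg (sub_pos.mpr hp).le (sq_nonneg (b t))]
  have hode' : ((p - 1) * b t ^ 2 + a t ^ 2) * b₂ +
      ((2 * p - 3) * b t ^ 2 + (p - 1) * a t ^ 2) * a t = 0 := by
    calc _ = ((p - 1) * b t ^ 2 + a t ^ 2) * (b₂ + ((2 * p - 3) * b t ^ 2 + (p - 1) * a t ^ 2) /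
          ((p - 1) * b t ^ 2 + a t ^ 2) * a t) := by field_simp
      _ = 0 := by rw [hode, mul_zero]
  have hsqrt (s : ℝ) : √(b s ^ 2 + a s ^ 2) ^ (p - 2) = (b s ^ 2 + a s ^ 2) ^ ((p - 2) / 2) := by
    rw [sqrt_eq_rpow, ← rpow_mul (by positivity)]
    congr 1
    ring
  have hQ : HasDerivAt (fun s => b s ^ 2 + a s ^ 2) (2 * b t * b₂ + 2 * a t * b t) t := by
    refine ((hb.fun_pow 2).fun_add (ha.fun_pow 2)).congr_deriv ?_
    norm_num
  simp only [hsqrt]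
  refine ((hQ.rpow_const (p := (p - 2) / 2) (Or.inl hq.ne')).mul hb).congr_deriv ?_
  rw [show (p - 2) / 2 = (p - 2) / 2 - 1 + 1 by ring, rpow_add_one hq.ne', add_sub_cancel_right]
  linear_combination (b t ^ 2 + a t ^ 2) ^ ((p - 2) / 2 - 1) * hode'

section Euclidean

variable {n : ℕ} {i j : Fin n}

noncomputable def divergence (F : EuclideanSpace ℝ (Fin n) → EuclideanSpace ℝ (Fin n))
    (x : EuclideanSpace ℝ (Fin n)) : ℝ :=
  ∑ k, fderiv ℝ (fun y => F y k) x (EuclideanSpace.single k 1)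

theorem EuclideanSpace.norm_smul_single_add_smul_single (hij : i ≠ j) (u v : ℝ) :
    ‖u • EuclideanSpace.single i (1 : ℝ) + v • EuclideanSpace.single j 1‖ = √(u ^ 2 + v ^ 2) := by
  have horth :
      inner ℝ (u • EuclideanSpace.single i (1 : ℝ)) (v • EuclideanSpace.single j 1) = 0 := by
    simp [EuclideanSpace.inner_single_left, real_inner_smul_left, real_inner_smul_right, hij.symm]
  rw [norm_add_eq_sqrt_iff_real_inner_eq_zero.mpr horth]
  simp [norm_smul, sq]

theorem hasGradientAt_exp_mul_comp (c : ℝ) {χ : ℝ → ℝ} {χ' : ℝ} {y : EuclideanSpace ℝ (Fin n)}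
    (hχ : HasDerivAt χ χ' (y i)) :
    HasGradientAt (fun z : EuclideanSpace ℝ (Fin n) => exp (c * z j) * χ (z i))
      (exp (c * y j) • (χ' • EuclideanSpace.single i 1 + (c * χ (y i)) • EuclideanSpace.single j 1))
      y := by
  have hexp : HasFDerivAt (fun z : EuclideanSpace ℝ (Fin n) => exp (c * z j))
      (exp (c * y j) • c • EuclideanSpace.proj j) y :=
    (hasDerivAt_exp _).comp_hasFDerivAt y
      ((EuclideanSpace.proj (𝕜 := ℝ) j).hasFDerivAt.const_mul c)
  have hcomp : HasFDerivAt (fun z : EuclideanSpace ℝ (Fin n) => χ (z i))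
      (χ' • EuclideanSpace.proj i) y :=
    hχ.comp_hasFDerivAt y (EuclideanSpace.proj (𝕜 := ℝ) i).hasFDerivAt
  rw [hasGradientAt_iff_hasFDerivAt]
  refine (hexp.mul hcomp).congr_fderiv ?_
  ext v
  simp only [add_apply, smul_apply, PiLp.proj_apply, smul_eq_mul, map_add, map_smul,
    InnerProductSpace.toDual_apply_apply, EuclideanSpace.inner_single_left, map_one, one_mul]
  ring

theorem hasGradientAt_exp_neg_mul_comp {a : ℝ → ℝ} {b : ℝ} {y : EuclideanSpace ℝ (Fin n)}
    (ha : HasDerivAt a b (y i)) :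
    HasGradientAt (fun z : EuclideanSpace ℝ (Fin n) => exp (-z j) * a (z i))
      (exp (-y j) • (b • EuclideanSpace.single i 1 + (-a (y i)) • EuclideanSpace.single j 1))
      y := by
  simpa only [neg_one_mul] using hasGradientAt_exp_mul_comp (j := j) (-1) ha

theorem divergence_exp_smul_comp (c : ℝ) {W : ℝ → EuclideanSpace ℝ (Fin n)} {Wi' : ℝ}
    {x : EuclideanSpace ℝ (Fin n)} (hW : DifferentiableAt ℝ W (x i))
    (hWi : HasDerivAt (fun t => W t i) Wi' (x i)) :
    divergence (fun y => exp (c * y j) • W (y i)) x = exp (c * x j) * (Wi' + c * W (x i) j) := by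
  have hWk (k : Fin n) : HasDerivAt (fun t => W t k) (deriv W (x i) k) (x i) :=
    (EuclideanSpace.proj (𝕜 := ℝ) k).hasFDerivAt.comp_hasDerivAt _ hW.hasDerivAt
  have hcomp (k : Fin n) :
      fderiv ℝ (fun y : EuclideanSpace ℝ (Fin n) => (exp (c * y j) • W (y i)) k) x
        (EuclideanSpace.single k 1) =
      exp (c * x j) * ((if k = i then deriv W (x i) k else 0) +
        (if k = j then c * W (x i) k else 0)) := by
    simp only [PiLp.smul_apply, smul_eq_mul]
    rw [(hasGradientAt_exp_mul_comp c (hWk k)).hasFDerivAt.fderiv]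
    simp [InnerProductSpace.toDual_apply_apply, EuclideanSpace.inner_single_right,
      eq_comm (a := k)]
    split_ifs <;> ring
  simp only [divergence, hcomp, ← Finset.mul_sum, Finset.sum_add_distrib, Finset.sum_ite_eq',
    Finset.mem_univ, if_true, (hWk i).unique hWi]

theorem divergence_pFlux_exp_neg_mul_comp (hij : i ≠ j) (p : ℝ) {a : ℝ → ℝ}
    (ha : Differentiable ℝ a) {x : EuclideanSpace ℝ (Fin n)}
    (ha' : DifferentiableAt ℝ (deriv a) (x i)) (hx : (a (x i), deriv a (x i)) ≠ (0, 0)) {φ' : ℝ}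
    (hφ : HasDerivAt (fun t => √(deriv a t ^ 2 + a t ^ 2) ^ (p - 2) * deriv a t) φ' (x i)) :
    divergence (fun y => ‖gradient (fun z => exp (-z j) * a (z i)) y‖ ^ (p - 2) •
        gradient (fun z => exp (-z j) * a (z i)) y) x =
      exp ((1 - p) * x j) *
        (φ' + (p - 1) * (√(deriv a (x i) ^ 2 + a (x i) ^ 2) ^ (p - 2) * a (x i))) := by
  set w : ℝ → EuclideanSpace ℝ (Fin n) := fun t =>
    deriv a t • EuclideanSpace.single i 1 + (-a t) • EuclideanSpace.single j 1
  have hnorm (t : ℝ) : ‖w t‖ = √(deriv a t ^ 2 + a t ^ 2) := by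
    rw [EuclideanSpace.norm_smul_single_add_smul_single hij, neg_sq]
  have hw : w (x i) ≠ 0 := by
    rw [← norm_ne_zero_iff, hnorm]
    exact (sqrt_pos.mpr (sq_add_sq_pos_of_pair_ne_zero hx)).ne'
  set W : ℝ → EuclideanSpace ℝ (Fin n) := fun t => ‖w t‖ ^ (p - 2) • w t
  have hflux : (fun y => ‖gradient (fun z => exp (-z j) * a (z i)) y‖ ^ (p - 2) •
      gradient (fun z => exp (-z j) * a (z i)) y) = fun y => exp ((1 - p) * y j) • W (y i) := by
    ext y : 1
    rw [(hasGradientAt_exp_neg_mul_comp (ha _).hasDerivAt).gradient, norm_exp_smul_rpow_smul,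
      show (p - 2 + 1) * -y j = (1 - p) * y j by ring]
  have hWi : HasDerivAt (fun t => W t i) φ' (x i) := by
    convert hφ using 2 with t
    simp only [W, PiLp.smul_apply, hnorm]
    simp [w, hij.symm]
  have hW : DifferentiableAt ℝ W (x i) := by
    have hwd : DifferentiableAt ℝ w (x i) := by fun_prop
    exact ((hwd.norm ℝ hw).rpow_const (Or.inl (norm_ne_zero_iff.mpr hw))).smul hwd
  rw [hflux, divergence_exp_smul_comp (1 - p) hW hWi]
  simp only [W, PiLp.smul_apply, hnorm]
  simp [w, hij]
  ring

end Euclidean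

/-- Wolff's real-valued `p`-harmonic functions: if `a : ℝ → ℝ` is `C²` and satisfies
`a'' + V(a,a') a = 0` with `V(a,a') = ((2p-3)(a')² + (p-1)a²)/((p-1)(a')² + a²)`
wherever `(a, a') ≠ (0,0)`, then `h(x) = e^{-x_n} a(x_1)` satisfies the `p`-Laplace
equation `div(|∇h|^{p-2}∇h) = 0` pointwise at every point of the upper half space
where `∇h ≠ 0`. -/
theorem wolff_pHarmonic (n : ℕ) (hn : 2 ≤ n) (p : ℝ) (hp : 1 < p)
    (a : ℝ → ℝ) (ha : ContDiff ℝ 2 a)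
    (hODE : ∀ t : ℝ, (a t, deriv a t) ≠ (0, 0) →
      deriv (deriv a) t +
        (((2 * p - 3) * (deriv a t) ^ 2 + (p - 1) * (a t) ^ 2) /
          ((p - 1) * (deriv a t) ^ 2 + (a t) ^ 2)) * a t = 0)
    (h : EuclideanSpace ℝ (Fin n) → ℝ)
    (hh : ∀ x, h x = Real.exp (-(x ⟨n - 1, by omega⟩)) * a (x ⟨0, by omega⟩)) :
    ∀ x : EuclideanSpace ℝ (Fin n), 0 < x ⟨n - 1, by omega⟩ → gradient h x ≠ 0 →
      ∑ i, fderiv ℝ (fun y => (‖gradient h y‖ ^ (p - 2) : ℝ) * gradient h y i) x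
          (EuclideanSpace.single i 1) = 0 := by
  intro x _ hx
  set I : Fin n := ⟨0, by omega⟩
  set J : Fin n := ⟨n - 1, by omega⟩
  have hIJ : I ≠ J := Fin.ne_of_val_ne (by simp only [I, J]; omega)
  obtain rfl : h = fun z => exp (-z J) * a (z I) := funext hh
  have ha' : Differentiable ℝ a := ha.differentiable two_ne_zero
  have ha'' : Differentiable ℝ (deriv a) := (ha.iterate_deriv' 1 1).differentiable one_ne_zero
  have hpair : (a (x I), deriv a (x I)) ≠ (0, 0) := by
    contrapose! hx
    rw [Prod.mk.injEq] at hx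
    simp [(hasGradientAt_exp_neg_mul_comp (j := J) (ha' _).hasDerivAt).gradient, hx]
  change divergence (fun y => ‖gradient _ y‖ ^ (p - 2) • gradient _ y) x = 0
  rw [divergence_pFlux_exp_neg_mul_comp hIJ p ha' (ha'' _) hpair
    (hasDerivAt_sqrt_rpow_mul_of_wolff_ode hp (ha' _).hasDerivAt (ha'' _).hasDerivAt hpair
      (hODE _ hpair))]
  ring
end
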